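/- Let R = ℂ[x₀,…,x₅]/(x₀²,…,x₅²) and let ζ be a complex number with ζ³ = −1. Then the space of degree-3 elements q of R satisfying (x₀ − ζx₁)·q = 0, (x₂ − ζx₃)·q = 0 and (x₄ − ζx₅)·q = 0 in R is one-dimensional, spanned by p_ζ = (x₀ + ζx₁)(x₂ + ζx₃)(x₄ + ζx₅). -/

import Mathlib

open MvPolynomial

noncomputable section

/-- The Jacobian ideal of the Fermat cubic fourfold `x₀³ + ⋯ + x₅³`,
generated by the squares of the six variables. -/
def fermatJacIdeal : Ideal (MvPolynomial (Fin 6) ℂ) :=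
  Ideal.span (Set.range fun i : Fin 6 => (X i : MvPolynomial (Fin 6) ℂ) ^ 2)

/-- The Jacobian ring `R = ℂ[x₀,…,x₅]/(x₀²,…,x₅²)` of the Fermat cubic fourfold. -/
abbrev FermatJacRing := MvPolynomial (Fin 6) ℂ ⧸ fermatJacIdeal

/-- The quotient map `ℂ[x₀,…,x₅] → R`. -/
def fermatπ : MvPolynomial (Fin 6) ℂ →ₐ[ℂ] FermatJacRing :=
  Ideal.Quotient.mkₐ ℂ fermatJacIdeal

/-- The degree-`d` graded component of `R`. -/
def fermatDeg (d : ℕ) : Submodule ℂ FermatJacRing :=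
  (homogeneousSubmodule (Fin 6) ℂ d).map fermatπ.toLinearMap

/-- The class `p_ζ = (x₀+ζx₁)(x₂+ζx₃)(x₄+ζx₅)` in `R`. -/
def fermatPlaneClass (ζ : ℂ) : FermatJacRing :=
  fermatπ ((X 0 + C ζ * X 1) * (X 2 + C ζ * X 3) * (X 4 + C ζ * X 5))


/-!
A polynomial lies in `(x₀², …, x₅²)` iff all its squarefree coefficients vanish, so everything
can be read off coefficients of a representative `f`. If `(xₐ - ζ x_b) f` lies in the ideal and
`m` is a squarefree monomial avoiding `xₐ, x_b`, the coefficient of `xₐ m` gives `f_m = 0` and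
that of `xₐ x_b m` gives `f_{x_b m} = ζ f_{xₐ m}`. A squarefree cubic monomial either avoids one
of the pairs `{x₀, x₁}, {x₂, x₃}, {x₄, x₅}`, or is a transversal taking one variable from each;
transversal coefficients are then tied to that of `x₀x₂x₄` by the second relation. Hence
`f - f_{x₀x₂x₄} p_ζ` has no squarefree coefficients, i.e. `[f]` is a multiple of `p_ζ`; and
`p_ζ ≠ 0` because its coefficient of `x₀x₂x₄` is `1`.
-/

theorem Finsupp.single_one_add_apply_le_one {σ : Type*} {a : σ} {d : σ →₀ ℕ}
    (hd : ∀ i, d i ≤ 1) (ha : d a = 0) (i : σ) : (single a 1 + d : σ →₀ ℕ) i ≤ 1 := by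
  rcases eq_or_ne a i with rfl | hi
  · simp [ha]
  · simpa [single_apply, hi] using hd i

open Finsupp in
theorem Finsupp.pair_eq_zero_or_eq_transversal {d : Fin 6 →₀ ℕ} (hd : ∀ i, d i ≤ 1)
    (hdeg : d.degree = 3) :
    (d 0 = 0 ∧ d 1 = 0) ∨ (d 2 = 0 ∧ d 3 = 0) ∨ (d 4 = 0 ∧ d 5 = 0) ∨
      ∃ i j k : Fin 6, (i = 0 ∨ i = 1) ∧ (j = 2 ∨ j = 3) ∧ (k = 4 ∨ k = 5) ∧
        d = single i 1 + single j 1 + single k 1 := by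
  rw [degree_eq_sum, Fin.sum_univ_six] at hdeg
  have := hd 0; have := hd 1; have := hd 2; have := hd 3; have := hd 4; have := hd 5
  by_cases h01 : d 0 = 0 ∧ d 1 = 0
  · exact Or.inl h01
  by_cases h23 : d 2 = 0 ∧ d 3 = 0
  · exact Or.inr <| Or.inl h23
  by_cases h45 : d 4 = 0 ∧ d 5 = 0
  · exact Or.inr <| Or.inr <| Or.inl h45
  refine Or.inr <| Or.inr <| Or.inr ⟨if d 0 = 1 then 0 else 1, if d 2 = 1 then 2 else 3,
    if d 4 = 1 then 4 else 5, by split_ifs <;> simp, by split_ifs <;> simp,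
    by split_ifs <;> simp, ?_⟩
  ext l
  fin_cases l <;> split_ifs <;> simp <;> omega

namespace MvPolynomial

open Finsupp

section IdealOfSquares

variable {σ R : Type*} [CommRing R]

variable (σ R) in
abbrev idealOfSquares : Ideal (MvPolynomial σ R) := Ideal.span (Set.range fun i => X i ^ 2)

theorem mem_idealOfSquares_iff {f : MvPolynomial σ R} :
    f ∈ idealOfSquares σ R ↔ ∀ d : σ →₀ ℕ, (∀ i, d i ≤ 1) → coeff d f = 0 := by
  have hgen : Set.range (fun i => (X i : MvPolynomial σ R) ^ 2) =
      (fun s => monomial s 1) '' Set.range fun i => single i 2 := by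
    simp only [← Set.range_comp, Function.comp_def, X_pow_eq_monomial]
  rw [idealOfSquares, hgen, mem_ideal_span_monomial_image]
  simp only [Set.exists_range_iff, single_le_iff, mem_support_iff]
  refine ⟨fun h d hd => by_contra fun hne => ?_, fun h d hd => by_contra fun hne => ?_⟩
  · obtain ⟨i, hi⟩ := h d hne
    exact absurd (hd i) (by omega)
  · push Not at hne
    exact hd (h d fun i => by have := hne i; omega)

theorem X_sub_C_mul_X_mul_X_add_C_mul_X_mem (a b : σ) (c : R) :
    (X a - C c * X b) * (X a + C c * X b) ∈ idealOfSquares σ R := by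
  rw [show (X a - C c * X b) * (X a + C c * X b) = X a ^ 2 - C c ^ 2 * X b ^ 2 by ring]
  exact sub_mem (Ideal.subset_span ⟨a, rfl⟩)
    (Ideal.mul_mem_left _ _ (Ideal.subset_span ⟨b, rfl⟩))

variable {a b : σ} {c : R} {f : MvPolynomial σ R} {d : σ →₀ ℕ}

theorem coeff_single_add_X_sub_C_mul_X_mul (hab : a ≠ b) (hb : d b = 0) :
    coeff (single a 1 + d) ((X a - C c * X b) * f) = coeff d f := by
  classical
  rw [sub_mul, coeff_sub, mul_assoc, coeff_C_mul, coeff_X_mul, coeff_X_mul', if_neg]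
  · ring
  simp [hab, hb]

theorem coeff_eq_zero_of_X_sub_C_mul_X_mul_mem (hab : a ≠ b)
    (hf : (X a - C c * X b) * f ∈ idealOfSquares σ R) (hd : ∀ i, d i ≤ 1)
    (ha : d a = 0) (hb : d b = 0) : coeff d f = 0 := by
  rw [← coeff_single_add_X_sub_C_mul_X_mul hab hb]
  exact mem_idealOfSquares_iff.1 hf _ (single_one_add_apply_le_one hd ha)

theorem coeff_single_add_eq_mul_of_X_sub_C_mul_X_mul_mem (hab : a ≠ b)
    (hf : (X a - C c * X b) * f ∈ idealOfSquares σ R) (hd : ∀ i, d i ≤ 1)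
    (ha : d a = 0) (hb : d b = 0) :
    coeff (single b 1 + d) f = c * coeff (single a 1 + d) f := by
  have h := mem_idealOfSquares_iff.1 hf (single a 1 + (single b 1 + d))
    (single_one_add_apply_le_one (single_one_add_apply_le_one hd hb) (by simp [hab, ha]))
  rw [sub_mul, coeff_sub, mul_assoc, coeff_C_mul, coeff_X_mul, add_left_comm, coeff_X_mul] at h
  linear_combination h

end IdealOfSquares

section Fin6

variable {R : Type*} [CommRing R] {c : R} {g : MvPolynomial (Fin 6) R}

theorem coeff_transversal_eq_zero (h01 : (X 0 - C c * X 1) * g ∈ idealOfSquares (Fin 6) R)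
    (h23 : (X 2 - C c * X 3) * g ∈ idealOfSquares (Fin 6) R)
    (h45 : (X 4 - C c * X 5) * g ∈ idealOfSquares (Fin 6) R)
    (h024 : coeff (single 0 1 + single 2 1 + single 4 1) g = 0) {i j k : Fin 6}
    (hi : i = 0 ∨ i = 1) (hj : j = 2 ∨ j = 3) (hk : k = 4 ∨ k = 5) :
    coeff (single i 1 + single j 1 + single k 1) g = 0 := by
  have swap {a b : Fin 6} {e : Fin 6 →₀ ℕ}
      (hf : (X a - C c * X b) * g ∈ idealOfSquares (Fin 6) R) (hab : a ≠ b)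
      (he : ∀ l, e l ≤ 1) (ha : e a = 0) (hb : e b = 0)
      (h : coeff (single a 1 + e) g = 0) : coeff (single b 1 + e) g = 0 := by
    rw [coeff_single_add_eq_mul_of_X_sub_C_mul_X_mul_mem hab hf he ha hb, h, mul_zero]
  -- Starting from `x₀x₂x₄`, swap `x₀ ↦ x₁`, then `x₂ ↦ x₃`, then `x₄ ↦ x₅` where needed.
  have hi24 : coeff (single i 1 + (single 2 1 + single 4 1)) g = 0 := by
    rcases hi with rfl | rfl
    · rwa [← add_assoc]
    · exact swap h01 (by decide) (fun l => by fin_cases l <;> simp) (by simp) (by simp)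
        (by rwa [← add_assoc])
  have hij4 : coeff (single j 1 + (single i 1 + single 4 1)) g = 0 := by
    rcases hj with rfl | rfl
    · rwa [add_left_comm]
    · exact swap h23 (by decide) (fun l => by rcases hi with rfl | rfl <;> fin_cases l <;> simp)
        (by rcases hi with rfl | rfl <;> simp) (by rcases hi with rfl | rfl <;> simp)
        (by rwa [add_left_comm])
  rw [add_comm]
  rcases hk with rfl | rfl
  · convert hij4 using 2; abel
  · refine swap h45 (by decide) (fun l => ?_) ?_ ?_ (by convert hij4 using 2; abel) <;>
      rcases hi with rfl | rfl <;> rcases hj with rfl | rfl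
    all_goals first | fin_cases l <;> simp | simp

theorem mem_idealOfSquares_of_X_sub_C_mul_X_mul_mem (hg : g.IsHomogeneous 3)
    (h01 : (X 0 - C c * X 1) * g ∈ idealOfSquares (Fin 6) R)
    (h23 : (X 2 - C c * X 3) * g ∈ idealOfSquares (Fin 6) R)
    (h45 : (X 4 - C c * X 5) * g ∈ idealOfSquares (Fin 6) R)
    (h024 : coeff (single 0 1 + single 2 1 + single 4 1) g = 0) :
    g ∈ idealOfSquares (Fin 6) R := by
  refine mem_idealOfSquares_iff.2 fun d hd => ?_
  by_cases hdeg : d.degree = 3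
  · obtain ⟨h0, h1⟩ | ⟨h2, h3⟩ | ⟨h4, h5⟩ | ⟨i, j, k, hi, hj, hk, rfl⟩ :=
      pair_eq_zero_or_eq_transversal hd hdeg
    · exact coeff_eq_zero_of_X_sub_C_mul_X_mul_mem (by decide) h01 hd h0 h1
    · exact coeff_eq_zero_of_X_sub_C_mul_X_mul_mem (by decide) h23 hd h2 h3
    · exact coeff_eq_zero_of_X_sub_C_mul_X_mul_mem (by decide) h45 hd h4 h5
    · exact coeff_transversal_eq_zero h01 h23 h45 h024 hi hj hk
  · exact hg.coeff_eq_zero hdeg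

end Fin6

end MvPolynomial

open Finsupp

def fermatPlanePoly {R : Type*} [CommRing R] (c : R) : MvPolynomial (Fin 6) R :=
  (X 0 + C c * X 1) * (X 2 + C c * X 3) * (X 4 + C c * X 5)

section PlanePoly

variable {R : Type*} [CommRing R] (c : R)

theorem isHomogeneous_fermatPlanePoly : (fermatPlanePoly c).IsHomogeneous 3 := by
  have h (a b : Fin 6) : (X a + C c * X b : MvPolynomial (Fin 6) R).IsHomogeneous 1 :=
    (isHomogeneous_X _ _).add (isHomogeneous_C_mul_X _ _)
  exact ((h 0 1).mul (h 2 3)).mul (h 4 5)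

theorem coeff_fermatPlanePoly_024 :
    coeff (single 0 1 + single 2 1 + single 4 1) (fermatPlanePoly c) = 1 := by
  have h : fermatPlanePoly c = X 0 * (X 2 * X 4)
      + X 1 * (C c * (X 2 + C c * X 3) * (X 4 + C c * X 5))
      + X 3 * (C c * X 0 * (X 4 + C c * X 5)) + X 5 * (C c * X 0 * X 2) := by
    rw [fermatPlanePoly]; ring
  simp [h, add_assoc, coeff_X_mul']

theorem X_sub_C_mul_X_mul_fermatPlanePoly_mem :
    (X 0 - C c * X 1) * fermatPlanePoly c ∈ idealOfSquares (Fin 6) R ∧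
    (X 2 - C c * X 3) * fermatPlanePoly c ∈ idealOfSquares (Fin 6) R ∧
    (X 4 - C c * X 5) * fermatPlanePoly c ∈ idealOfSquares (Fin 6) R := by
  refine ⟨?_, ?_, ?_⟩ <;> unfold fermatPlanePoly
  · rw [show ∀ ℓ p q r : MvPolynomial (Fin 6) R, ℓ * (p * q * r) = ℓ * p * (q * r) by
      intros; ring]
    exact Ideal.mul_mem_right _ _ (X_sub_C_mul_X_mul_X_add_C_mul_X_mem 0 1 c)
  · rw [show ∀ ℓ p q r : MvPolynomial (Fin 6) R, ℓ * (p * q * r) = ℓ * q * (p * r) by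
      intros; ring]
    exact Ideal.mul_mem_right _ _ (X_sub_C_mul_X_mul_X_add_C_mul_X_mem 2 3 c)
  · rw [show ∀ ℓ p q r : MvPolynomial (Fin 6) R, ℓ * (p * q * r) = ℓ * r * (p * q) by
      intros; ring]
    exact Ideal.mul_mem_right _ _ (X_sub_C_mul_X_mul_X_add_C_mul_X_mem 4 5 c)

end PlanePoly

theorem fermatπ_eq_zero_iff {f : MvPolynomial (Fin 6) ℂ} :
    fermatπ f = 0 ↔ f ∈ idealOfSquares (Fin 6) ℂ :=
  Ideal.Quotient.eq_zero_iff_mem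

theorem fermatπ_mem_ker_mulLeft_iff {ℓ f : MvPolynomial (Fin 6) ℂ} :
    fermatπ f ∈ LinearMap.ker (LinearMap.mulLeft ℂ (fermatπ ℓ)) ↔
      ℓ * f ∈ idealOfSquares (Fin 6) ℂ := by
  rw [LinearMap.mem_ker, LinearMap.mulLeft_apply, ← map_mul, fermatπ_eq_zero_iff]

theorem fermatPlaneClass_eq (ζ : ℂ) : fermatPlaneClass ζ = fermatπ (fermatPlanePoly ζ) := rfl

theorem fermatπ_mem_span_fermatPlaneClass {ζ : ℂ} {f : MvPolynomial (Fin 6) ℂ}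
    (hf : f.IsHomogeneous 3)
    (h01 : (X 0 - C ζ * X 1) * f ∈ idealOfSquares (Fin 6) ℂ)
    (h23 : (X 2 - C ζ * X 3) * f ∈ idealOfSquares (Fin 6) ℂ)
    (h45 : (X 4 - C ζ * X 5) * f ∈ idealOfSquares (Fin 6) ℂ) :
    fermatπ f ∈ Submodule.span ℂ {fermatPlaneClass ζ} := by
  set a := coeff (single 0 1 + single 2 1 + single 4 1) f
  obtain ⟨hP01, hP23, hP45⟩ := X_sub_C_mul_X_mul_fermatPlanePoly_mem ζ
  have hsub {ℓ : MvPolynomial (Fin 6) ℂ} (hf : ℓ * f ∈ idealOfSquares (Fin 6) ℂ)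
      (hP : ℓ * fermatPlanePoly ζ ∈ idealOfSquares (Fin 6) ℂ) :
      ℓ * (f - a • fermatPlanePoly ζ) ∈ idealOfSquares (Fin 6) ℂ := by
    rw [mul_sub, mul_smul_comm]
    exact sub_mem hf (Submodule.smul_of_tower_mem _ a hP)
  have hP : (a • fermatPlanePoly ζ).IsHomogeneous 3 := by
    rw [smul_eq_C_mul]
    exact (isHomogeneous_fermatPlanePoly ζ).C_mul a
  have hg : f - a • fermatPlanePoly ζ ∈ idealOfSquares (Fin 6) ℂ :=
    mem_idealOfSquares_of_X_sub_C_mul_X_mul_mem (hf.sub hP)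
      (hsub h01 hP01) (hsub h23 hP23) (hsub h45 hP45)
      (by rw [coeff_sub, coeff_smul, coeff_fermatPlanePoly_024, smul_eq_mul, mul_one, sub_self])
  rw [← fermatπ_eq_zero_iff, map_sub, map_smul, sub_eq_zero] at hg
  exact Submodule.mem_span_singleton.2 ⟨a, hg.symm⟩

theorem fermatPlaneClass_ne_zero (ζ : ℂ) : fermatPlaneClass ζ ≠ 0 := by
  rw [fermatPlaneClass_eq, Ne, fermatπ_eq_zero_iff, mem_idealOfSquares_iff]
  intro h
  have h024 := h (single 0 1 + single 2 1 + single 4 1) fun l => by fin_cases l <;> simp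
  exact one_ne_zero ((coeff_fermatPlanePoly_024 ζ).symm.trans h024)

theorem fermat_annihilator_one_dimensional (ζ : ℂ) :
    fermatDeg 3
        ⊓ LinearMap.ker (LinearMap.mulLeft ℂ (fermatπ (X 0 - C ζ * X 1)))
        ⊓ LinearMap.ker (LinearMap.mulLeft ℂ (fermatπ (X 2 - C ζ * X 3)))
        ⊓ LinearMap.ker (LinearMap.mulLeft ℂ (fermatπ (X 4 - C ζ * X 5)))
      = Submodule.span ℂ {fermatPlaneClass ζ}
    ∧ fermatPlaneClass ζ ≠ 0 := by
  refine ⟨le_antisymm ?_ ?_, fermatPlaneClass_ne_zero ζ⟩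
  · rintro _ ⟨⟨⟨⟨f, hf, rfl⟩, h01⟩, h23⟩, h45⟩
    simp only [SetLike.mem_coe, AlgHom.toLinearMap_apply, fermatπ_mem_ker_mulLeft_iff]
      at h01 h23 h45
    exact fermatπ_mem_span_fermatPlaneClass ((mem_homogeneousSubmodule _ _).1 hf) h01 h23 h45
  · obtain ⟨hP01, hP23, hP45⟩ := X_sub_C_mul_X_mul_fermatPlanePoly_mem ζ
    have hP := (mem_homogeneousSubmodule _ _).2 (isHomogeneous_fermatPlanePoly ζ)
    rw [Submodule.span_le, Set.singleton_subset_iff, fermatPlaneClass_eq]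
    exact ⟨⟨⟨⟨_, hP, rfl⟩, fermatπ_mem_ker_mulLeft_iff.2 hP01⟩,
      fermatπ_mem_ker_mulLeft_iff.2 hP23⟩, fermatπ_mem_ker_mulLeft_iff.2 hP45⟩
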